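/- arXiv:2512.07879 — 3 statements merged into one kernel-verified Lean document; each statement's English description precedes it below -/
import Mathlib

section
/- Let u and μ̂ be unit vectors in ℝⁿ with u ≠ μ̂, and let η ∈ (0,1). Define ũ = ((1−η)u + ηmμ̂) / ‖(1−η)u + ημ̂‖ (assuming the denominator is nonzero, e.g. when ⟨u, μ̂⟩ ≥ 0). Then ⟨ũ, μ̂⟩ > ⟨u, μ̂⟩; that is, the cosine of the angle to μ̂ strictly increases after the mean-tilt step. -/
open scoped RealInnerProductSpace

theorem mean_tilt_increases_cosine {n : ℕ}
    (u μ : EuclideanSpace ℝ (Fin n))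
    (hu : ‖u‖ = 1) (hμ : ‖μ‖ = 1) (hne : u ≠ μ)
    (hcos : 0 ≤ ⟪u, μ⟫)
    (η : ℝ) (hη0 : 0 < η) (hη1 : η < 1) :
    ⟪‖(1 - η) • u + η • μ‖⁻¹ • ((1 - η) • u + η • μ), μ⟫ > ⟪u, μ⟫ := by
  set c := ⟪u, μ⟫ with hc
  have hc1 : c < 1 := (inner_lt_one_iff_real_of_norm_eq_one hu hμ).mpr hne
  set v := (1 - η) • u + η • μ with hv
  have h1η : (0:ℝ) ≤ 1 - η := by linarith
  have hvm : ⟪v, μ⟫ = (1 - η) * c + η := by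
    rw [hv, inner_add_left, real_inner_smul_left, real_inner_smul_left,
      real_inner_self_eq_norm_sq, hμ, ← hc]; ring
  have hnv2 : ‖v‖ ^ 2 = (1 - η) ^ 2 + 2 * η * (1 - η) * c + η ^ 2 := by
    rw [hv, norm_add_sq_real, norm_smul, norm_smul, real_inner_smul_left,
      real_inner_smul_right, hu, hμ, Real.norm_eq_abs, Real.norm_eq_abs,
      abs_of_nonneg h1η, abs_of_pos hη0, ← hc]; ring
  have hpos : 0 < ‖v‖ := by
    have h2 : 0 < ‖v‖ ^ 2 := by
      rw [hnv2]
      nlinarith [mul_nonneg (mul_nonneg (le_of_lt hη0) h1η) hcos, sq_nonneg (1 - η),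
        pow_pos hη0 2]
    have := norm_nonneg v
    nlinarith
  have hlt1 : ‖v‖ < 1 := by
    have h2 : ‖v‖ ^ 2 < 1 ^ 2 := by
      rw [hnv2]
      nlinarith [mul_pos (mul_pos hη0 (by linarith : (0:ℝ) < 1 - η))
        (by linarith : (0:ℝ) < 1 - c)]
    exact lt_of_pow_lt_pow_left₀ 2 zero_le_one h2
  have hinv : (1 : ℝ) < ‖v‖⁻¹ := (one_lt_inv₀ hpos).mpr hlt1
  have heq : ⟪‖v‖⁻¹ • v, μ⟫ = ‖v‖⁻¹ * ((1 - η) * c + η) := by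
    rw [real_inner_smul_left, hvm]
  rw [heq]
  have hexpr : 0 < (1 - η) * c + η := by nlinarith
  nlinarith [mul_pos (by linarith : (0:ℝ) < ‖v‖⁻¹ - 1) hexpr,
    mul_pos hη0 (by linarith : (0:ℝ) < 1 - c)]
end

section
/- Let η ∈ (0,1) and let (u^{(t)}) be the sequence of unit vectors in ℝ₊ⁿ defined by u^{(t+1)} = ((1−η)u^{(t)} + ημ̂)/‖(1−η)u^{(t)} + ημ̂‖ for a fixed unit vector μ̂ ∈ ℝ₊ⁿ. Then the sequence c_t := ⟨u^{(t)}, μ̂⟩ is nondecreasing, and for every α < 1 there exists T such that c_t ≥ α for all t ≥ T; i.e., u^{(t)} converges to μ̂. -/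
open scoped RealInnerProductSpace

theorem mean_tilt_converges {n : ℕ}
    (η : ℝ) (hη0 : 0 < η) (hη1 : η < 1)
    (μ : EuclideanSpace ℝ (Fin n)) (hμ_unit : ‖μ‖ = 1) (hμ_nonneg : ∀ j, 0 ≤ μ j)
    (u : ℕ → EuclideanSpace ℝ (Fin n))
    (hu_unit : ∀ t, ‖u t‖ = 1) (hu_nonneg : ∀ t j, 0 ≤ u t j)
    (hrec : ∀ t, u (t + 1) =
      ‖(1 - η) • u t + η • μ‖⁻¹ • ((1 - η) • u t + η • μ)) :
    Monotone (fun t => ⟪u t, μ⟫) ∧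
      ∀ α : ℝ, α < 1 → ∃ T : ℕ, ∀ t, T ≤ t → α ≤ ⟪u t, μ⟫ := by
  set c : ℕ → ℝ := fun t => ⟪u t, μ⟫ with hc
  have hle1 : ∀ t, c t ≤ 1 := by
    intro t
    have := real_inner_le_norm (u t) μ
    simpa [hu_unit t, hμ_unit] using this
  have hnn : ∀ t, 0 ≤ c t := by
    intro t
    simp only [hc, PiLp.inner_apply, RCLike.inner_apply, conj_trivial]
    exact Finset.sum_nonneg fun j _ => mul_nonneg (hμ_nonneg j) (hu_nonneg t j)
  have hstep : ∀ t, (1 - η) * c t + η ≤ c (t + 1) := by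
    intro t
    set v := (1 - η) • u t + η • μ with hv
    have hinner : ⟪v, μ⟫ = (1 - η) * c t + η := by
      have : ⟪μ, μ⟫ = (1 : ℝ) := by
        rw [real_inner_self_eq_norm_sq, hμ_unit]; norm_num
      rw [hv, inner_add_left, real_inner_smul_left, real_inner_smul_left, this, mul_one, hc]
    have hvpos : 0 < (1 - η) * c t + η := by
      have : 0 ≤ (1 - η) * c t := mul_nonneg (by linarith) (hnn t)
      linarith
    have hnv : ‖v‖ ≤ 1 := by
      calc ‖v‖ ≤ ‖(1 - η) • u t‖ + ‖η • μ‖ := norm_add_le _ _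
        _ = (1 - η) * 1 + η * 1 := by
            rw [norm_smul, norm_smul, hu_unit t, hμ_unit]
            simp [abs_of_nonneg (le_of_lt hη0), abs_of_nonneg (by linarith : (0:ℝ) ≤ 1 - η)]
        _ = 1 := by ring
    have hnvpos : 0 < ‖v‖ := by
      by_contra h
      push_neg at h
      have : ‖v‖ = 0 := le_antisymm h (norm_nonneg _)
      have hv0 : v = 0 := norm_eq_zero.mp this
      rw [hv0] at hinner
      simp at hinner
      linarith
    have : c (t + 1) = ‖v‖⁻¹ * ((1 - η) * c t + η) := by
      rw [hc]
      simp only [hrec t, ← hv, real_inner_smul_left]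
      rw [hinner]
    rw [this]
    have h1 : (1 : ℝ) ≤ ‖v‖⁻¹ := by
      rw [le_inv_comm₀ one_pos hnvpos]
      simpa using hnv
    nlinarith
  have hmono : Monotone c := by
    apply monotone_nat_of_le_succ
    intro t
    have := hstep t
    have := hle1 t
    nlinarith
  refine ⟨hmono, ?_⟩
  intro α hα
  have hgeo : ∀ t, 1 - c t ≤ (1 - η) ^ t := by
    intro t
    induction t with
    | zero => simpa using hnn 0
    | succ t ih =>
      have := hstep t
      have h1η : (0:ℝ) ≤ 1 - η := by linarith
      calc 1 - c (t + 1) ≤ (1 - η) * (1 - c t) := by nlinarith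
        _ ≤ (1 - η) * (1 - η) ^ t := by nlinarith [pow_nonneg h1η t]
        _ = (1 - η) ^ (t + 1) := by ring
  obtain ⟨T, hT⟩ := exists_pow_lt_of_lt_one (by linarith : (0:ℝ) < 1 - α)
    (by linarith : 1 - η < 1)
  refine ⟨T, fun t ht => ?_⟩
  have hdec : (1 - η) ^ t ≤ (1 - η) ^ T :=
    pow_le_pow_of_le_one (by linarith) (by linarith) ht
  have := hgeo t
  linarith
end

section
/- Let η ∈ (0,1) and let u, μ̂ be unit vectors with c := ⟨u, μ̂⟩ ∈ [0, 1). Define ũ = ((1−η)u + ημ̂)/‖(1−η)u + ημ̂‖ and c' := ⟨ũ, μ̂⟩. Then c'² − c² = [η²(1 − c²) + 2η(1−η)c(1 − c²)] / (1 − 2η + 2η² + 2η(1−η)c) > 0. -/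
open scoped RealInnerProductSpace

theorem tilt_cosine_gap_formula {n : ℕ}
    (u μ : EuclideanSpace ℝ (Fin n))
    (hu : ‖u‖ = 1) (hμ : ‖μ‖ = 1)
    (c : ℝ) (hc : c = ⟪u, μ⟫) (hc0 : 0 ≤ c) (hc1 : c < 1)
    (η : ℝ) (hη0 : 0 < η) (hη1 : η < 1)
    (c' : ℝ)
    (hc' : c' = ⟪‖(1 - η) • u + η • μ‖⁻¹ • ((1 - η) • u + η • μ), μ⟫) :
    c' ^ 2 - c ^ 2 =
        (η ^ 2 * (1 - c ^ 2) + 2 * η * (1 - η) * c * (1 - c ^ 2)) /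
          (1 - 2 * η + 2 * η ^ 2 + 2 * η * (1 - η) * c) ∧
      0 < c' ^ 2 - c ^ 2 := by
  set v := (1 - η) • u + η • μ with hv
  have huu : ⟪u, u⟫ = 1 := by
    rw [real_inner_self_eq_norm_sq, hu]; norm_num
  have hμμ : ⟪μ, μ⟫ = 1 := by
    rw [real_inner_self_eq_norm_sq, hμ]; norm_num
  have hcμu : ⟪μ, u⟫ = c := by rw [real_inner_comm]; exact hc.symm
  have hD : ‖v‖ ^ 2 = 1 - 2 * η + 2 * η ^ 2 + 2 * η * (1 - η) * c := by
    rw [← real_inner_self_eq_norm_sq, hv]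
    simp only [inner_add_left, inner_add_right, real_inner_smul_left,
      real_inner_smul_right, huu, hμμ, ← hc, hcμu]
    ring
  have hη1' : (0:ℝ) ≤ 1 - η := by linarith
  have hDpos : 0 < 1 - 2 * η + 2 * η ^ 2 + 2 * η * (1 - η) * c := by
    nlinarith [sq_nonneg (1 - 2 * η), mul_nonneg (mul_nonneg hη0.le hη1') hc0]
  have hvnorm : 0 < ‖v‖ := by
    have h2 : (0:ℝ) < ‖v‖ ^ 2 := hD ▸ hDpos
    nlinarith [norm_nonneg v]
  have hvμ : ⟪v, μ⟫ = (1 - η) * c + η := by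
    rw [hv]
    simp only [inner_add_left, real_inner_smul_left, hμμ, ← hc]
    ring
  have hc'2 : c' ^ 2 = ((1 - η) * c + η) ^ 2 /
      (1 - 2 * η + 2 * η ^ 2 + 2 * η * (1 - η) * c) := by
    rw [hc', real_inner_smul_left, hvμ, mul_pow, ← hD]
    field_simp
  constructor
  · rw [hc'2, div_sub' (ne_of_gt hDpos), div_left_inj' (ne_of_gt hDpos)]; ring
  · rw [hc'2]
    rw [div_sub' (ne_of_gt hDpos)]
    apply div_pos _ hDpos
    have h1c2 : 0 < 1 - c ^ 2 := by nlinarith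
    nlinarith [mul_pos (pow_pos hη0 2) h1c2,
      mul_nonneg (mul_nonneg (mul_nonneg hη0.le (by linarith : (0:ℝ) ≤ 1 - η)) hc0) h1c2.le]
end
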